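/- arXiv:2007.05959 — 2 statements merged into one kernel-verified Lean document; each statement's English description precedes it below -/
import Mathlib

section
/- Let p1, p2 be real numbers with 11 + 4*p1 + p2 ≠ 0, and let E : ℕ → ℝ satisfy E 1 = 36 and E (n+1) = E n + (441/(11 + 4*p1 + p2)) * (12 + 4*p1 + p2)^n - 441/(11 + 4*p1 + p2) + 36 for all n ≥ 1. Then for all n ≥ 1, E n = (441/(11 + 4*p1 + p2)^2) * (12 + 4*p1 + p2)^n + ((144*p1 + 36*p2 - 45)/(11 + 4*p1 + p2)) * n - 441/(11 + 4*p1 + p2)^2. -/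
theorem stmt_1 (p1 p2 : ℝ) (hne : 11 + 4*p1 + p2 ≠ 0) (E : ℕ → ℝ)
    (h1 : E 1 = 36)
    (hrec : ∀ n : ℕ, 1 ≤ n →
      E (n+1) = E n + (441/(11 + 4*p1 + p2)) * (12 + 4*p1 + p2)^n
        - 441/(11 + 4*p1 + p2) + 36) :
    ∀ n : ℕ, 1 ≤ n →
      E n = (441/(11 + 4*p1 + p2)^2) * (12 + 4*p1 + p2)^n
        + ((144*p1 + 36*p2 - 45)/(11 + 4*p1 + p2)) * n
        - 441/(11 + 4*p1 + p2)^2 := by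
  intro n hn
  induction n with
  | zero => omega
  | succ m ih =>
    rcases Nat.eq_or_lt_of_le hn with h | h
    · have hm0 : m = 0 := by omega
      subst hm0
      rw [h1]
      field_simp
      ring
    · have hm : 1 ≤ m := by omega
      rw [hrec m hm, ih hm]
      field_simp
      push_cast
      ring
end

section
/- For all real p1, p2 with 11 + 4*p1 + p2 ≠ 0 and all n ≥ 1, 400 * EP n = 441 * ES n - 1035 * n - 441, where EP n = (441/(11+4p1+p2)^2)*(12+4p1+p2)^n + ((144p1+36p2-45)/(11+4p1+p2))*n - 441/(11+4p1+p2)^2 and ES n = (400/(11+4p1+p2)^2)*(12+4p1+p2)^n + ((140p1+35p2-15)/(11+4p1+p2))*n - 400/(11+4p1+p2)^2 + 1. -/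
theorem stmt_4 (p1 p2 : ℝ) (hne : 11 + 4*p1 + p2 ≠ 0) (EP ES : ℕ → ℝ)
    (hEP : ∀ n : ℕ, EP n = (441/(11 + 4*p1 + p2)^2) * (12 + 4*p1 + p2)^n
        + ((144*p1 + 36*p2 - 45)/(11 + 4*p1 + p2)) * n - 441/(11 + 4*p1 + p2)^2)
    (hES : ∀ n : ℕ, ES n = (400/(11 + 4*p1 + p2)^2) * (12 + 4*p1 + p2)^n
        + ((140*p1 + 35*p2 - 15)/(11 + 4*p1 + p2)) * n - 400/(11 + 4*p1 + p2)^2 + 1) :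
    ∀ n : ℕ, 1 ≤ n → 400 * EP n = 441 * ES n - 1035 * n - 441 := by
  intro n hn
  rw [hEP, hES]
  field_simp
  ring
end
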